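/- Let b be a symplectic (non-degenerate alternate) bilinear form on a finite-dimensional vector space V over a field K, and let u ∈ GL(V) be a b-isometry such that u − id is nilpotent. Then for every natural number k, the rank of (u − id)^{2k} is even. -/

import Mathlib

/-!
Put `N = u - 1`. As `u` is an isometry, `u⁻¹ - 1` is the `B`-adjoint of `N`, so the alternating
form `C x y = B (N ^ k x) (N ^ k y)` equals `B ((u⁻¹ - 1) ^ k * N ^ k x) y`, and
`(u⁻¹ - 1) * N = -u⁻¹ * N ^ 2`. Since `B` is nondegenerate and `u` invertible, `C` therefore has
the same rank as `N ^ (2 * k)`. Finally, an alternating form has even rank: it is nondegenerate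
on a complement of its kernel, and a nondegenerate alternating space is the orthogonal sum of a
hyperbolic plane and a smaller nondegenerate alternating space.
-/

open Module LinearMap

theorem LinearMap.finrank_range_comp_of_injective {K V₁ V₂ V₃ : Type*} [Field K]
    [AddCommGroup V₁] [Module K V₁] [AddCommGroup V₂] [Module K V₂]
    [AddCommGroup V₃] [Module K V₃] {g : V₂ →ₗ[K] V₃} (hg : Function.Injective g)
    (f : V₁ →ₗ[K] V₂) :
    finrank K (range (g ∘ₗ f)) = finrank K (range f) := by
  rw [range_comp]
  exact (Submodule.equivMapOfInjective g hg _).finrank_eq.symm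

theorem LinearMap.IsAdjointPair.pow {R M : Type*} [CommSemiring R] [AddCommMonoid M]
    [Module R M] {B : M →ₗ[R] M →ₗ[R] R} {f g : Module.End R M} (h : IsAdjointPair B B f g) :
    ∀ n : ℕ, IsAdjointPair B B ⇑(f ^ n) ⇑(g ^ n)
  | 0 => isAdjointPair_one
  | n + 1 => by
    rw [pow_succ, pow_succ']
    exact (h.pow n).mul h

theorem LinearEquiv.isAdjointPair_symm_of_isometry {R M : Type*} [CommSemiring R]
    [AddCommMonoid M] [Module R M] {B : M →ₗ[R] M →ₗ[R] R} (u : M ≃ₗ[R] M)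
    (hu : ∀ x y, B (u x) (u y) = B x y) : IsAdjointPair B B u.symm u := fun x y ↦ by
  rw [← hu, apply_symm_apply]

theorem Units.inv_sub_one_pow_mul_sub_one_pow {R : Type*} [Ring R] (u : Rˣ) (k : ℕ) :
    ((↑u⁻¹ : R) - 1) ^ k * ((u : R) - 1) ^ k = (-↑u⁻¹) ^ k * ((u : R) - 1) ^ (2 * k) := by
  have hu : Commute (↑u⁻¹ : R) u := (Commute.refl (u : R)).units_inv_left
  have hprod : ((↑u⁻¹ : R) - 1) * ((u : R) - 1) = -↑u⁻¹ * ((u : R) - 1) ^ 2 := by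
    simp only [sq, mul_sub, sub_mul, ← mul_assoc, Units.inv_mul, one_mul, mul_one, neg_mul]
    abel
  rw [← ((hu.sub_left (Commute.one_left _)).sub_right (Commute.one_right _)).mul_pow, hprod,
    ((hu.sub_right (Commute.one_right _)).pow_right 2).neg_left.mul_pow, pow_mul]

theorem LinearMap.IsRefl.nondegenerate_restrict_of_isCompl_ker {R M : Type*} [CommRing R]
    [AddCommGroup M] [Module R M] {B : M →ₗ[R] M →ₗ[R] R} (hB : B.IsRefl)
    {W : Submodule R M} (hW : IsCompl W (ker B)) :
    (B.domRestrict₁₂ W W).Nondegenerate := by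
  have hBW : (B.domRestrict₁₂ W W).IsRefl := fun x y ↦ hB x y
  rw [hBW.nondegenerate_iff_separatingLeft]
  rintro ⟨x, hxW⟩ hx
  have hxker : x ∈ ker B := by
    ext z
    obtain ⟨w, hw, v, hv, rfl⟩ :=
      Submodule.mem_sup.1 (hW.sup_eq_top ▸ Submodule.mem_top : z ∈ W ⊔ ker B)
    have hxw : B x w = 0 := hx ⟨w, hw⟩
    have hvx : B v x = 0 := by rw [mem_ker.1 hv, zero_apply]
    simp [hxw, hB v x hvx]
  simpa using hW.disjoint.le_bot ⟨hxW, hxker⟩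

namespace LinearMap.IsAlt

variable {K V : Type*} [Field K] [AddCommGroup V] [Module K V] {B : V →ₗ[K] V →ₗ[K] K}

theorem eq_zero_of_apply_smul_add_smul (hB : B.IsAlt) {x y : V} (hxy : B x y ≠ 0) {a b : K}
    (hx : B (a • x + b • y) x = 0) (hy : B (a • x + b • y) y = 0) : a = 0 ∧ b = 0 := by
  have hyx : B y x = -B x y := (hB.neg x y).symm
  simp only [map_add, map_smul, add_apply, smul_apply, smul_eq_mul, hB x, hB y, hyx] at hx hy
  constructor
  · simpa [hxy] using hy
  · simpa [hxy] using hx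

theorem linearIndependent_pair (hB : B.IsAlt) {x y : V} (hxy : B x y ≠ 0) :
    LinearIndependent K ![x, y] :=
  LinearIndependent.pair_iff.2 fun a b hab ↦
    hB.eq_zero_of_apply_smul_add_smul hxy (by simp [hab]) (by simp [hab])

theorem finrank_span_pair (hB : B.IsAlt) {x y : V} (hxy : B x y ≠ 0) :
    finrank K (Submodule.span K {x, y}) = 2 := by
  have := finrank_span_eq_card (hB.linearIndependent_pair hxy)
  rwa [Matrix.range_cons_cons_empty, Fintype.card_fin] at this

theorem disjoint_span_pair_orthogonal (hB : B.IsAlt) {x y : V} (hxy : B x y ≠ 0) :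
    Disjoint (Submodule.span K {x, y}) (BilinForm.orthogonal B (Submodule.span K {x, y})) := by
  rw [Submodule.disjoint_def]
  intro w hw hw'
  obtain ⟨a, b, rfl⟩ := Submodule.mem_span_pair.1 hw
  have hortho (z : V) (hz : z ∈ Submodule.span K {x, y}) : B (a • x + b • y) z = 0 :=
    (BilinForm.IsAlt.eq_iff hB).1 (BilinForm.mem_orthogonal_iff.1 hw' z hz)
  obtain ⟨rfl, rfl⟩ := hB.eq_zero_of_apply_smul_add_smul hxy
    (hortho x (Submodule.subset_span (by simp))) (hortho y (Submodule.subset_span (by simp)))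
  simp

theorem even_finrank_of_nondegenerate [FiniteDimensional K V] (hB : B.IsAlt)
    (hnd : B.Nondegenerate) : Even (finrank K V) := by
  induction h : finrank K V using Nat.strong_induction_on generalizing V B with
  | _ n ih =>
  rcases (finrank K V).eq_zero_or_pos with h0 | hpos
  · exact h ▸ h0 ▸ Even.zero
  have : Nontrivial V := finrank_pos_iff.1 hpos
  obtain ⟨x, hx⟩ := exists_ne (0 : V)
  obtain ⟨y, hxy⟩ : ∃ y, B x y ≠ 0 := by
    by_contra! hx0
    exact hx (hnd.1 x hx0)
  have hdisj := hB.disjoint_span_pair_orthogonal hxy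
  have hdim := Submodule.finrank_add_eq_of_isCompl
    ((BilinForm.isCompl_orthogonal_iff_disjoint hB.isRefl).2 hdisj)
  rw [hB.finrank_span_pair hxy] at hdim
  set W := Submodule.span K {x, y}
  have hWperp : (BilinForm.restrict B (BilinForm.orthogonal B W)).Nondegenerate := by
    refine BilinForm.nondegenerate_restrict_of_disjoint_orthogonal B hB.isRefl ?_
    rwa [BilinForm.orthogonal_orthogonal hnd hB.isRefl, disjoint_comm]
  have hWperp_even := ih (finrank K (BilinForm.orthogonal B W)) (by omega)
    (B := BilinForm.restrict B _) (fun z ↦ hB z) hWperp rfl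
  rw [← h, ← hdim, add_comm]
  exact hWperp_even.add even_two

theorem even_finrank_range [FiniteDimensional K V] (hB : B.IsAlt) :
    Even (finrank K (range B)) := by
  obtain ⟨W, hW⟩ := (ker B).exists_isCompl
  have hWnd := hB.isRefl.nondegenerate_restrict_of_isCompl_ker hW.symm
  have hrank := finrank_range_add_finrank_ker B
  rw [← Submodule.finrank_add_eq_of_isCompl hW.symm] at hrank
  rw [show finrank K (range B) = finrank K W by omega]
  exact even_finrank_of_nondegenerate (fun z ↦ hB z) hWnd

end LinearMap.IsAlt

theorem rank_even_of_symplectic_unipotent_general {K V : Type*} [Field K] [AddCommGroup V]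
    [Module K V] [FiniteDimensional K V]
    (B : V →ₗ[K] V →ₗ[K] K)
    (halt : ∀ x, B x x = 0)
    (hreg : B.Nondegenerate)
    (u : V ≃ₗ[K] V)
    (hiso : ∀ x y, B (u x) (u y) = B x y) :
    ∀ k : ℕ, Even (Module.finrank K
      (LinearMap.range (((u : V →ₗ[K] V) - LinearMap.id) ^ (2 * k)))) := by
  intro k
  set v := (GeneralLinearGroup.generalLinearEquiv K V).symm u
  have hadj : IsAdjointPair B B ⇑(((↑v⁻¹ : Module.End K V) - 1) ^ k)
      ⇑(((v : Module.End K V) - 1) ^ k) :=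
    ((u.isAdjointPair_symm_of_isometry hiso).sub isAdjointPair_one).pow k
  have hC : (B ∘ₗ (((↑v⁻¹ : Module.End K V) - 1) ^ k * ((v : Module.End K V) - 1) ^ k)).IsAlt :=
    fun x ↦ by
      rw [comp_apply, Module.End.mul_apply, hadj]
      exact halt _
  have hinj : Function.Injective (B ∘ₗ (-↑v⁻¹ : Module.End K V) ^ k) :=
    (ker_eq_bot.1 (separatingLeft_iff_ker_eq_bot.1 hreg.1)).comp
      (Module.End.isUnit_iff _ |>.1 ((v⁻¹).isUnit.neg.pow k)).1
  have hC_even := hC.even_finrank_range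
  rwa [Units.inv_sub_one_pow_mul_sub_one_pow, Module.End.mul_eq_comp, ← comp_assoc,
    finrank_range_comp_of_injective hinj] at hC_even

theorem rank_even_of_symplectic_unipotent {K V : Type*} [Field K] [AddCommGroup V]
    [Module K V] [FiniteDimensional K V]
    (B : V →ₗ[K] V →ₗ[K] K)
    (halt : ∀ x, B x x = 0)
    (hreg : B.Nondegenerate)
    (u : V ≃ₗ[K] V)
    (hiso : ∀ x y, B (u x) (u y) = B x y)
    (hnil : IsNilpotent ((u : V →ₗ[K] V) - LinearMap.id)) :
    ∀ k : ℕ, Even (Module.finrank K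
      (LinearMap.range (((u : V →ₗ[K] V) - LinearMap.id) ^ (2 * k)))) :=
  rank_even_of_symplectic_unipotent_general B halt hreg u hiso
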